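/- Let H be a finite-dimensional complex inner product space and let S : ℂ^k → H and T : ℂ^ℓ → H be linear maps. Then det([S,T]* [S,T]) ≤ det(S* S) · det(T* T), where [S,T] is the combined map ℂ^k ⊕ ℂ^ℓ → H. Moreover, equality holds if and only if either the right-hand side is zero or the ranges of S and T are orthogonal. -/

import Mathlib

open scoped ComplexOrder InnerProductSpace MatrixOrder

/-!
Write the Gram matrix of the columns of `[S,T]` in block form `G = [[A, B], [Bᴴ, D]]`. If `A` or
`D` is singular then so is `G`. Otherwise the Schur complement gives
`det G = det A · det (D - Bᴴ A⁻¹ B)` with `0 ≤ D - Bᴴ A⁻¹ B ≤ D` in the Loewner order.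
Conjugating by `D^{-1/2}` turns this into a positive matrix `M ≤ 1`, whose eigenvalues lie in
`[0, 1]`; hence `det M ≤ 1`, with equality only for `M = 1`, that is, only when `Bᴴ A⁻¹ B = 0`,
i.e. `B = 0`, i.e. the ranges of `S` and `T` are orthogonal.
-/

/-- The combined map `[S,T] : ℂ^ι ⊕ ℂ^κ → H`, `(x, y) ↦ S x + T y`. -/
noncomputable def combinedMap {ι κ H : Type*}
    [NormedAddCommGroup H] [InnerProductSpace ℂ H]
    (S : EuclideanSpace ℂ ι →ₗ[ℂ] H) (T : EuclideanSpace ℂ κ →ₗ[ℂ] H) :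
    EuclideanSpace ℂ (ι ⊕ κ) →ₗ[ℂ] H :=
  S ∘ₗ ((WithLp.linearEquiv 2 ℂ (ι → ℂ)).symm.toLinearMap ∘ₗ LinearMap.funLeft ℂ ℂ Sum.inl ∘ₗ
      (WithLp.linearEquiv 2 ℂ (ι ⊕ κ → ℂ)).toLinearMap) +
    T ∘ₗ ((WithLp.linearEquiv 2 ℂ (κ → ℂ)).symm.toLinearMap ∘ₗ LinearMap.funLeft ℂ ℂ Sum.inr ∘ₗ
      (WithLp.linearEquiv 2 ℂ (ι ⊕ κ → ℂ)).toLinearMap)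

theorem Finset.prod_eq_one_iff_of_nonneg_of_le_one {ι R : Type*} [CommSemiring R] [PartialOrder R]
    [IsOrderedRing R] {s : Finset ι} {f : ι → R} (h0 : ∀ i ∈ s, 0 ≤ f i)
    (h1 : ∀ i ∈ s, f i ≤ 1) : ∏ i ∈ s, f i = 1 ↔ ∀ i ∈ s, f i = 1 := by
  classical
  refine ⟨fun h i hi ↦ ?_, Finset.prod_eq_one⟩
  have hrest : ∏ j ∈ s.erase i, f j ≤ 1 :=
    prod_le_one (fun j hj ↦ h0 j (mem_of_mem_erase hj)) fun j hj ↦ h1 j (mem_of_mem_erase hj)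
  have h_ge := mul_le_of_le_one_right (h0 i hi) hrest
  rw [mul_prod_erase s f hi, h] at h_ge
  exact le_antisymm (h1 i hi) h_ge

namespace Matrix

variable {m n 𝕜 : Type*} [RCLike 𝕜] [Fintype n] [DecidableEq n]

theorem PosSemidef.det_le_one {M : Matrix n n 𝕜} (hM : M.PosSemidef) (hM1 : M ≤ 1) :
    M.det ≤ 1 ∧ (M.det = 1 → M = 1) := by
  have hle : ∀ i, hM.1.eigenvalues i ≤ 1 := fun i ↦
    (CFC.le_one_iff M hM.1.isSelfAdjoint).mp hM1 _ (hM.1.eigenvalues_mem_spectrum_real i)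
  have hdet : M.det = ((∏ i, hM.1.eigenvalues i : ℝ) : 𝕜) := by
    rw [hM.1.det_eq_prod_eigenvalues, RCLike.ofReal_prod]
  rw [hdet, ← RCLike.ofReal_one, RCLike.ofReal_le_ofReal, RCLike.ofReal_inj,
    Finset.prod_eq_one_iff_of_nonneg_of_le_one (fun i _ ↦ hM.eigenvalues_nonneg i) fun i _ ↦ hle i]
  refine ⟨Finset.prod_le_one (fun i _ ↦ hM.eigenvalues_nonneg i) fun i _ ↦ hle i, fun h ↦ ?_⟩
  rw [hM.1.spectral_theorem]
  simp [Function.comp_def, h]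

theorem PosSemidef.det_le_det_of_le {A B : Matrix n n 𝕜} (hA : A.PosSemidef) (hAB : A ≤ B)
    (hB : B.PosDef) : A.det ≤ B.det ∧ (A.det = B.det → A = B) := by
  set s := CFC.sqrt B
  have hss : s * s = B := CFC.sqrt_mul_sqrt_self B hB.posSemidef.nonneg
  have hs : s.det ≠ 0 := fun h ↦ hB.det_pos.ne' (by rw [← hss, det_mul, h, zero_mul])
  have hts : s⁻¹ * s = 1 := nonsing_inv_mul s (Ne.isUnit hs)
  have hst : s * s⁻¹ = 1 := mul_nonsing_inv s (Ne.isUnit hs)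
  have hstar : star s⁻¹ = s⁻¹ := by
    rw [star_eq_conjTranspose, conjTranspose_nonsing_inv,
      (nonneg_iff_posSemidef.mp (CFC.sqrt_nonneg B)).1.eq]
  set M := s⁻¹ * A * s⁻¹ with hM
  have hM0 : M.PosSemidef := by
    simpa [hstar] using nonneg_iff_posSemidef.mp (star_left_conjugate_nonneg hA.nonneg s⁻¹)
  have hM1 : M ≤ 1 := by
    simpa [hstar, ← hss, ← mul_assoc, hts, mul_assoc _ s, hst] using
      star_left_conjugate_le_conjugate hAB s⁻¹
  have hA_eq : A = s * M * s := calc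
    A = s * s⁻¹ * A * (s⁻¹ * s) := by rw [hst, hts, one_mul, mul_one]
    _ = s * M * s := by simp only [hM, mul_assoc]
  have hdet : A.det = B.det * M.det := by rw [hA_eq, ← hss]; simp only [det_mul]; ring
  have hBpos := hB.det_pos
  refine ⟨?_, fun h ↦ ?_⟩
  · calc A.det = B.det * M.det := hdet
      _ ≤ B.det * 1 := mul_le_mul_of_nonneg_left (hM0.det_le_one hM1).1 hBpos.le
      _ = B.det := mul_one _
  · have hM_one : M = 1 :=
      (hM0.det_le_one hM1).2 <| mul_left_cancel₀ hBpos.ne' (by rw [← hdet, h, mul_one])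
    rw [hA_eq, hM_one, mul_one, hss]

theorem PosDef.conjTranspose_mul_mul_same_eq_zero_iff {P : Matrix n n 𝕜} (hP : P.PosDef)
    (B : Matrix n m 𝕜) : Bᴴ * P * B = 0 ↔ B = 0 := by
  refine ⟨fun h ↦ ?_, fun h ↦ by simp [h]⟩
  set s := CFC.sqrt P
  have hss : s * s = P := CFC.sqrt_mul_sqrt_self P hP.posSemidef.nonneg
  have hs : IsUnit s.det :=
    (isUnit_iff_isUnit_det s).mp ((CFC.isUnit_sqrt_iff P hP.posSemidef.nonneg).mpr hP.isUnit)
  have hsB : (s * B)ᴴ * (s * B) = 0 := calc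
    (s * B)ᴴ * (s * B) = Bᴴ * (s * s) * B := by
      rw [conjTranspose_mul, (nonneg_iff_posSemidef.mp (CFC.sqrt_nonneg P)).1.eq]
      simp only [Matrix.mul_assoc, s]
    _ = 0 := by rw [hss, h]
  calc B = s⁻¹ * (s * B) := by rw [← Matrix.mul_assoc, nonsing_inv_mul s hs, Matrix.one_mul]
    _ = 0 := by rw [conjTranspose_mul_self_eq_zero.mp hsB, Matrix.mul_zero]

theorem PosSemidef.det_fromBlocks_le [Fintype m] [DecidableEq m] {A : Matrix m m 𝕜}
    {B : Matrix m n 𝕜} {D : Matrix n n 𝕜} (hG : (fromBlocks A B Bᴴ D).PosSemidef) :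
    (fromBlocks A B Bᴴ D).det ≤ A.det * D.det ∧
      ((fromBlocks A B Bᴴ D).det = A.det * D.det ↔ A.det * D.det = 0 ∨ B = 0) := by
  by_cases hAD : A.det * D.det = 0
  · have hG0 : (fromBlocks A B Bᴴ D).det = 0 := by
      by_contra hG0
      have hGpd := hG.posDef_iff_det_ne_zero.mpr hG0
      exact mul_ne_zero (hGpd.submatrix Sum.inl_injective).det_pos.ne'
        (hGpd.submatrix Sum.inr_injective).det_pos.ne' hAD
    rw [hG0, hAD]
    exact ⟨le_rfl, iff_of_true rfl (Or.inl rfl)⟩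
  obtain ⟨hA, hD⟩ := mul_ne_zero_iff.mp hAD
  have hApd : A.PosDef := (hG.submatrix Sum.inl).posDef_iff_det_ne_zero.mpr hA
  have hDpd : D.PosDef := (hG.submatrix Sum.inr).posDef_iff_det_ne_zero.mpr hD
  let := hApd.isUnit.invertible
  have hschur : (D - Bᴴ * A⁻¹ * B).PosSemidef := (hApd.fromBlocks₁₁ B D).mp hG
  have hle : D - Bᴴ * A⁻¹ * B ≤ D := by
    rw [le_iff, sub_sub_cancel]
    exact hApd.inv.posSemidef.conjTranspose_mul_mul_same B
  obtain ⟨hdet_le, hdet_eq⟩ := hschur.det_le_det_of_le hle hDpd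
  rw [det_fromBlocks₁₁, invOf_eq_nonsing_inv]
  refine ⟨mul_le_mul_of_nonneg_left hdet_le hApd.det_pos.le, ?_⟩
  rw [or_iff_right hAD, mul_right_inj' hA, ← hApd.inv.conjTranspose_mul_mul_same_eq_zero_iff]
  exact ⟨fun h ↦ by simpa using hdet_eq h, fun h ↦ by rw [h, sub_zero]⟩

theorem gram_sum_elim {E ι κ : Type*} [SeminormedAddCommGroup E] [InnerProductSpace 𝕜 E]
    (u : ι → E) (v : κ → E) :
    gram 𝕜 (Sum.elim u v) =
      fromBlocks (gram 𝕜 u) (of fun i j ↦ ⟪u i, v j⟫_𝕜) (of fun i j ↦ ⟪u i, v j⟫_𝕜)ᴴ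
        (gram 𝕜 v) := by
  ext (i | i) (j | j) <;> simp

end Matrix

section InnerProductSpace

variable {𝕜 E F ι κ : Type*} [RCLike 𝕜]

theorem LinearMap.det_adjoint_comp_self [Fintype ι] [DecidableEq ι]
    [NormedAddCommGroup E] [InnerProductSpace 𝕜 E] [FiniteDimensional 𝕜 E]
    [NormedAddCommGroup F] [InnerProductSpace 𝕜 F] [FiniteDimensional 𝕜 F]
    (L : E →ₗ[𝕜] F) (b : OrthonormalBasis ι 𝕜 E) :
    LinearMap.det (LinearMap.adjoint L ∘ₗ L) = (Matrix.gram 𝕜 (L ∘ b)).det := by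
  rw [← LinearMap.det_toMatrix b.toBasis]
  congr 1
  ext i j
  simp [LinearMap.toMatrix_apply, OrthonormalBasis.repr_apply_apply, LinearMap.adjoint_inner_right]

theorem LinearMap.isOrtho_range_iff {G : Type*} [NormedAddCommGroup G] [InnerProductSpace 𝕜 G]
    [AddCommGroup E] [Module 𝕜 E] [AddCommGroup F] [Module 𝕜 F]
    (S : E →ₗ[𝕜] G) (T : F →ₗ[𝕜] G) (b : Module.Basis ι 𝕜 E) (c : Module.Basis κ 𝕜 F) :
    LinearMap.range S ⟂ LinearMap.range T ↔ Matrix.of (fun i j ↦ ⟪S (b i), T (c j)⟫_𝕜) = 0 := by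
  rw [LinearMap.range_eq_map, LinearMap.range_eq_map, ← b.span_eq, ← c.span_eq,
    Submodule.map_span, Submodule.map_span, ← Set.range_comp, ← Set.range_comp,
    Submodule.isOrtho_span]
  simp [← Matrix.ext_iff]

theorem combinedMap_comp_basisFun [Fintype ι] [Fintype κ] {H : Type*} [NormedAddCommGroup H]
    [InnerProductSpace ℂ H]
    (S : EuclideanSpace ℂ ι →ₗ[ℂ] H) (T : EuclideanSpace ℂ κ →ₗ[ℂ] H) :
    combinedMap S T ∘ EuclideanSpace.basisFun (ι ⊕ κ) ℂ =
      Sum.elim (S ∘ EuclideanSpace.basisFun ι ℂ) (T ∘ EuclideanSpace.basisFun κ ℂ) := by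
  classical
  funext i
  cases i <;>
  · simp [combinedMap, LinearMap.funLeft, Function.comp_def, EuclideanSpace.basisFun_apply,
      ← Pi.zero_def]
    congr 1
    ext
    simp

end InnerProductSpace

/-- Subadditivity of log-determinant entropy: `det ([S,T]*[S,T]) ≤ det (S*S) · det (T*T)`,
with equality iff the right-hand side vanishes or the ranges of `S` and `T` are orthogonal. -/
theorem stmt_2 {k ℓ : ℕ} {H : Type*}
    [NormedAddCommGroup H] [InnerProductSpace ℂ H] [FiniteDimensional ℂ H]
    (S : EuclideanSpace ℂ (Fin k) →ₗ[ℂ] H) (T : EuclideanSpace ℂ (Fin ℓ) →ₗ[ℂ] H) :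
    LinearMap.det (LinearMap.adjoint (combinedMap S T) ∘ₗ combinedMap S T) ≤
        LinearMap.det (LinearMap.adjoint S ∘ₗ S) * LinearMap.det (LinearMap.adjoint T ∘ₗ T) ∧
      (LinearMap.det (LinearMap.adjoint (combinedMap S T) ∘ₗ combinedMap S T) =
          LinearMap.det (LinearMap.adjoint S ∘ₗ S) * LinearMap.det (LinearMap.adjoint T ∘ₗ T) ↔
        LinearMap.det (LinearMap.adjoint S ∘ₗ S) * LinearMap.det (LinearMap.adjoint T ∘ₗ T) = 0 ∨
          ∀ x ∈ LinearMap.range S, ∀ y ∈ LinearMap.range T, (inner ℂ x y : ℂ) = 0) := by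
  have hG := Matrix.posSemidef_gram ℂ
    (Sum.elim (S ∘ EuclideanSpace.basisFun (Fin k) ℂ) (T ∘ EuclideanSpace.basisFun (Fin ℓ) ℂ))
  rw [Matrix.gram_sum_elim] at hG
  rw [LinearMap.det_adjoint_comp_self _ (EuclideanSpace.basisFun _ ℂ), combinedMap_comp_basisFun,
    Matrix.gram_sum_elim, LinearMap.det_adjoint_comp_self S (EuclideanSpace.basisFun _ ℂ),
    LinearMap.det_adjoint_comp_self T (EuclideanSpace.basisFun _ ℂ),
    ← Submodule.isOrtho_iff_inner_eq, LinearMap.isOrtho_range_iff S T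
      (EuclideanSpace.basisFun _ ℂ).toBasis (EuclideanSpace.basisFun _ ℂ).toBasis]
  exact Matrix.PosSemidef.det_fromBlocks_le hG
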